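/- Let C = { X ∈ ℝ^{n₁×n₂} : ‖X‖ ≤ 1 } be the unit ball of the spectral norm. If g : ℝ^{n₁×n₂} → ℝ is convex on C and satisfies g(X) ≤ rank(X) for all X ∈ C, then g(X) ≤ ‖X‖_* for all X ∈ C. In other words, the nuclear norm is the largest convex function on C that lower-bounds the rank function, i.e., it is the convex envelope of the rank on C. -/

import Mathlib

open Matrix

/-- The singular values of `X` (unordered). -/
noncomputable def singularValues {n₁ n₂ : ℕ} (X : Matrix (Fin n₁) (Fin n₂) ℝ) : Fin n₂ → ℝ :=
  fun i => Real.sqrt ((Matrix.isHermitian_conjTranspose_mul_self X).eigenvalues i)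

/-- The nuclear norm: sum of the singular values. -/
noncomputable def nuclearNorm {n₁ n₂ : ℕ} (X : Matrix (Fin n₁) (Fin n₂) ℝ) : ℝ :=
  ∑ i, singularValues X i

/-- The spectral norm: the largest singular value. -/
noncomputable def matSpectralNorm {n₁ n₂ : ℕ} (X : Matrix (Fin n₁) (Fin n₂) ℝ) : ℝ :=
  ⨆ i, singularValues X i

/-!
Let `σ` be the singular values of `X` and `V` its right singular vectors. The map
`Y a = X V diag(a / σ) Vᵀ` is linear, `Y σ = X`, and at every vertex `a ∈ {0,1}ⁿ` of the unit
cube `Y a` lies in the spectral unit ball and has rank at most `∑ aᵢ`. So `g ∘ Y - ∑ aᵢ` is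
convex and nonpositive at the vertices of the cube, hence nonpositive on the cube, in particular
at `σ`, where it equals `g X - ‖X‖_*`.
-/

theorem ConvexOn.le_of_forall_le_of_mem_convexHull {𝕜 E β : Type*} [Field 𝕜] [LinearOrder 𝕜]
    [IsStrictOrderedRing 𝕜] [AddCommGroup E] [Module 𝕜 E] [AddCommGroup β] [LinearOrder β]
    [IsOrderedAddMonoid β] [Module 𝕜 β] [IsStrictOrderedModule 𝕜 β]
    {s t : Set E} {f l : E → β} {x : E} (hf : ConvexOn 𝕜 s f) (hl : ConcaveOn 𝕜 s l)
    (hts : t ⊆ s) (hle : ∀ y ∈ t, f y ≤ l y) (hx : x ∈ convexHull 𝕜 t) : f x ≤ l x := by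
  obtain ⟨y, hy, hxy⟩ := (hf.sub hl).exists_ge_of_mem_convexHull hts hx
  simpa only [Pi.sub_apply, sub_nonpos] using hxy.trans (sub_nonpos.2 (hle y hy))

theorem convexHull_pi_zero_one (ι : Type*) [Finite ι] :
    convexHull ℝ (Set.univ.pi fun _ : ι => ({0, 1} : Set ℝ)) = Set.Icc 0 1 := by
  rw [convexHull_pi, ← Set.pi_univ_Icc]
  simp [convexHull_pair, segment_eq_Icc]

theorem concaveOn_sum_apply {ι : Type*} [Fintype ι] {s : Set (ι → ℝ)} (hs : Convex ℝ s) :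
    ConcaveOn ℝ s fun a => ∑ i, a i :=
  ⟨hs, fun _ _ _ _ _ _ _ _ _ => by simp [Finset.sum_add_distrib, Finset.mul_sum]⟩

theorem card_ne_zero_eq_sum_of_mem_pi_zero_one {ι : Type*} [Fintype ι] {a : ι → ℝ}
    (ha : a ∈ Set.univ.pi fun _ : ι => ({0, 1} : Set ℝ)) :
    (Fintype.card {i // a i ≠ 0} : ℝ) = ∑ i, a i := by
  rw [Fintype.card_subtype]
  push_cast [Finset.card_filter]
  refine Finset.sum_congr rfl fun i _ => ?_
  rcases ha i (Set.mem_univ i) with h | h <;> simp_all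

theorem posSemidef_one_sub_conj_diagonal_iff {n : Type*} [Fintype n] [DecidableEq n]
    {U : Matrix n n ℝ} (hU : U ∈ unitaryGroup n ℝ) (d : n → ℝ) :
    (1 - U * diagonal d * star U).PosSemidef ↔ ∀ i, d i ≤ 1 := by
  have h : 1 - U * diagonal d * star U = U * diagonal (1 - d) * star U := by
    rw [show diagonal (1 - d) = 1 - diagonal d by rw [← diagonal_one, diagonal_sub]; rfl,
      Matrix.mul_sub, Matrix.sub_mul, Matrix.mul_one, Unitary.mul_star_self_of_mem hU]
  rw [h, (Unitary.isUnit_coe (U := ⟨U, hU⟩)).posSemidef_star_right_conjugate_iff,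
    posSemidef_diagonal_iff]
  simp

section
variable {n₁ n₂ : ℕ} (X : Matrix (Fin n₁) (Fin n₂) ℝ)

theorem singularValues_nonneg (i : Fin n₂) : 0 ≤ singularValues X i := Real.sqrt_nonneg _

theorem singularValues_sq (i : Fin n₂) :
    singularValues X i ^ 2 = (isHermitian_conjTranspose_mul_self X).eigenvalues i :=
  Real.sq_sqrt ((posSemidef_conjTranspose_mul_self X).eigenvalues_nonneg i)

noncomputable def rightSingularVectors : Matrix (Fin n₂) (Fin n₂) ℝ :=
  (isHermitian_conjTranspose_mul_self X).eigenvectorUnitary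

theorem rightSingularVectors_mem_unitaryGroup :
    rightSingularVectors X ∈ unitaryGroup (Fin n₂) ℝ :=
  Subtype.prop _

theorem conjTranspose_mul_self_eq :
    Xᴴ * X = rightSingularVectors X * diagonal (singularValues X ^ 2) *
      star (rightSingularVectors X) := by
  rw [show singularValues X ^ 2 = (isHermitian_conjTranspose_mul_self X).eigenvalues from
    funext (singularValues_sq X)]
  simpa [rightSingularVectors] using (isHermitian_conjTranspose_mul_self X).spectral_theorem

theorem matSpectralNorm_le_one_iff_singularValues_le_one :
    matSpectralNorm X ≤ 1 ↔ ∀ i, singularValues X i ≤ 1 :=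
  ⟨fun h i => (le_ciSup (Set.finite_range _).bddAbove i).trans h,
    fun h => Real.iSup_le h zero_le_one⟩

theorem matSpectralNorm_le_one_iff_posSemidef :
    matSpectralNorm X ≤ 1 ↔ (1 - Xᴴ * X).PosSemidef := by
  rw [matSpectralNorm_le_one_iff_singularValues_le_one, conjTranspose_mul_self_eq,
    posSemidef_one_sub_conj_diagonal_iff (rightSingularVectors_mem_unitaryGroup X)]
  simp [sq_le_one_iff₀ (singularValues_nonneg X _)]

theorem convex_setOf_matSpectralNorm_le_one :
    Convex ℝ {M : Matrix (Fin n₁) (Fin n₂) ℝ | matSpectralNorm M ≤ 1} := by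
  intro A hA B hB s t hs ht hst
  simp only [Set.mem_ofPred_eq, matSpectralNorm_le_one_iff_posSemidef] at hA hB ⊢
  obtain rfl : t = 1 - s := by linarith
  have key : 1 - (s • A + (1 - s) • B)ᴴ * (s • A + (1 - s) • B) =
      s • (1 - Aᴴ * A) + (1 - s) • (1 - Bᴴ * B) + (s * (1 - s)) • ((A - B)ᴴ * (A - B)) := by
    simp only [conjTranspose_add, conjTranspose_smul, conjTranspose_sub, star_trivial,
      Matrix.add_mul, Matrix.mul_add, Matrix.sub_mul, Matrix.mul_sub, Matrix.smul_mul,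
      Matrix.mul_smul, smul_sub, smul_add, smul_smul]
    module
  rw [key]
  exact ((hA.smul hs).add (hB.smul ht)).add
    ((posSemidef_conjTranspose_mul_self _).smul (mul_nonneg hs ht))

theorem conjTranspose_mul_rightSingularVectors_mul_self :
    (X * rightSingularVectors X)ᴴ * (X * rightSingularVectors X) =
      diagonal (singularValues X ^ 2) := by
  rw [conjTranspose_mul, Matrix.mul_assoc, ← Matrix.mul_assoc Xᴴ, conjTranspose_mul_self_eq,
    ← star_eq_conjTranspose]
  have hU := rightSingularVectors_mem_unitaryGroup X
  simp only [Matrix.mul_assoc, Unitary.star_mul_self_of_mem hU, Matrix.mul_one]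
  rw [← Matrix.mul_assoc, Unitary.star_mul_self_of_mem hU, Matrix.one_mul]

theorem mul_rightSingularVectors_apply_eq_zero {i : Fin n₂} (hi : singularValues X i = 0)
    (j : Fin n₁) : (X * rightSingularVectors X) j i = 0 := by
  have h := congr_fun (congr_fun (conjTranspose_mul_rightSingularVectors_mul_self X) i) i
  rw [mul_apply] at h
  simp only [conjTranspose_apply, star_trivial, diagonal_apply_eq, Pi.pow_apply, hi] at h
  exact mul_self_eq_zero.mp ((Finset.sum_eq_zero_iff_of_nonneg fun k _ => mul_self_nonneg _).mp
    (h.trans (zero_pow two_ne_zero)) j (Finset.mem_univ j))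

-- Where `singularValues X i = 0`, the junk value `a i / 0 = 0` is harmless: that column of
-- `X * rightSingularVectors X` vanishes.
noncomputable def rescaleSingularValues : (Fin n₂ → ℝ) →ₗ[ℝ] Matrix (Fin n₁) (Fin n₂) ℝ where
  toFun a := X * rightSingularVectors X * diagonal (fun i => a i / singularValues X i) *
    star (rightSingularVectors X)
  map_add' a b := by
    simp only [Pi.add_apply, add_div, ← diagonal_add, Matrix.mul_add, Matrix.add_mul]
  map_smul' c a := by
    rw [show (fun i => (c • a) i / singularValues X i) = c • fun i => a i / singularValues X i by
      ext i; exact mul_div_assoc _ _ _, diagonal_smul, Matrix.mul_smul, Matrix.smul_mul,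
      RingHom.id_apply]

theorem rescaleSingularValues_apply (a : Fin n₂ → ℝ) :
    rescaleSingularValues X a = X * rightSingularVectors X *
      diagonal (fun i => a i / singularValues X i) * star (rightSingularVectors X) := rfl

theorem rescaleSingularValues_singularValues : rescaleSingularValues X (singularValues X) = X := by
  have h : X * rightSingularVectors X *
      diagonal (fun i => singularValues X i / singularValues X i) = X * rightSingularVectors X := by
    ext j i
    rw [mul_diagonal]
    by_cases hi : singularValues X i = 0
    · rw [mul_rightSingularVectors_apply_eq_zero X hi, zero_mul]
    · rw [div_self hi, mul_one]
  rw [rescaleSingularValues_apply, h, Matrix.mul_assoc,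
    Unitary.mul_star_self_of_mem (rightSingularVectors_mem_unitaryGroup X), Matrix.mul_one]

theorem conjTranspose_mul_self_rescaleSingularValues (a : Fin n₂ → ℝ) :
    (rescaleSingularValues X a)ᴴ * rescaleSingularValues X a =
      rightSingularVectors X *
        diagonal (fun i => (a i / singularValues X i * singularValues X i) ^ 2) *
        star (rightSingularVectors X) := by
  set V := rightSingularVectors X
  set D := diagonal (fun i => a i / singularValues X i)
  have hD : Dᴴ = D := by simp [D]
  calc (X * V * D * star V)ᴴ * (X * V * D * star V)
      = V * (D * ((X * V)ᴴ * (X * V)) * D) * star V := by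
        simp only [star_eq_conjTranspose, conjTranspose_mul, conjTranspose_conjTranspose, hD,
          Matrix.mul_assoc]
    _ = _ := by
        rw [conjTranspose_mul_rightSingularVectors_mul_self, diagonal_mul_diagonal,
          diagonal_mul_diagonal]
        congr 3
        ext i
        rw [Pi.pow_apply]
        ring

theorem matSpectralNorm_rescaleSingularValues_le_one {a : Fin n₂ → ℝ} (ha : ∀ i, |a i| ≤ 1) :
    matSpectralNorm (rescaleSingularValues X a) ≤ 1 := by
  rw [matSpectralNorm_le_one_iff_posSemidef, conjTranspose_mul_self_rescaleSingularValues,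
    posSemidef_one_sub_conj_diagonal_iff (rightSingularVectors_mem_unitaryGroup X)]
  intro i
  rw [sq_le_one_iff_abs_le_one]
  by_cases hi : singularValues X i = 0
  · simp [hi]
  · rw [div_mul_cancel₀ _ hi]
    exact ha i

theorem rank_rescaleSingularValues_le (a : Fin n₂ → ℝ) :
    (rescaleSingularValues X a).rank ≤ Fintype.card {i // a i ≠ 0} := by
  rw [rescaleSingularValues_apply]
  calc _ ≤ (diagonal (fun i => a i / singularValues X i)).rank :=
        (rank_mul_le_left _ _).trans (rank_mul_le_right _ _)
    _ = Fintype.card {i // a i / singularValues X i ≠ 0} := rank_diagonal _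
    _ ≤ Fintype.card {i // a i ≠ 0} :=
        Fintype.card_subtype_mono _ _ fun i hi ha => hi (by rw [ha, zero_div])

end

/-- The nuclear norm is the convex envelope of the rank on the spectral norm
unit ball `C`: every function `g` convex on `C` with `g ≤ rank` on `C`
satisfies `g ≤ ‖·‖_*` on `C`. -/
theorem nuclearNorm_convex_envelope_of_rank (n₁ n₂ : ℕ)
    (g : Matrix (Fin n₁) (Fin n₂) ℝ → ℝ)
    (hconv : ∀ A, matSpectralNorm A ≤ 1 → ∀ B, matSpectralNorm B ≤ 1 →
        ∀ t : ℝ, 0 ≤ t → t ≤ 1 →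
          g (t • A + (1 - t) • B) ≤ t * g A + (1 - t) * g B)
    (hle : ∀ X, matSpectralNorm X ≤ 1 → g X ≤ (X.rank : ℝ)) :
    ∀ X : Matrix (Fin n₁) (Fin n₂) ℝ, matSpectralNorm X ≤ 1 → g X ≤ nuclearNorm X := by
  intro X hX
  set Y := rescaleSingularValues X
  have hg : ConvexOn ℝ {M | matSpectralNorm M ≤ 1} g := by
    refine ⟨convex_setOf_matSpectralNorm_le_one, fun A hA B hB s t hs ht hst => ?_⟩
    obtain rfl : t = 1 - s := by linarith
    exact hconv A hA B hB s hs (by linarith)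
  have hgY := hg.comp_linearMap Y
  have hvert : (Set.univ.pi fun _ => {0, 1}) ⊆ Y ⁻¹' {M | matSpectralNorm M ≤ 1} :=
    fun a ha => matSpectralNorm_rescaleSingularValues_le_one X fun i => by
      rcases ha i (Set.mem_univ i) with h | h <;> simp_all
  have hσ : singularValues X ∈ convexHull ℝ (Set.univ.pi fun _ => {0, 1}) := by
    rw [convexHull_pi_zero_one]
    exact ⟨singularValues_nonneg X, (matSpectralNorm_le_one_iff_singularValues_le_one X).1 hX⟩
  have key := hgY.le_of_forall_le_of_mem_convexHull (concaveOn_sum_apply hgY.1) hvert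
    (fun a ha => (hle _ (hvert ha)).trans <| by
      rw [← card_ne_zero_eq_sum_of_mem_pi_zero_one ha]
      exact_mod_cast rank_rescaleSingularValues_le X a) hσ
  rwa [Function.comp_apply, rescaleSingularValues_singularValues] at key
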